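/- Let G_orb denote the group obtained from G_sΔL by adding the relations ℓ₁² = 1, ℓ₂² = 1, ℓ∞² = 1. Then the assignment c₁, c₂, c₃, c₄ ↦ (0,0), ℓ₁ ↦ (1,0), ℓ₂ ↦ (0,1), ℓ∞ ↦ (1,1) defines a surjective group homomorphism φ: G_orb → ℤ/2 × ℤ/2, the short exact sequence 1 → ker φ → G_orb → ℤ/2 × ℤ/2 → 1 splits, and ker φ is isomorphic to G_symp (via a = c₂⁻¹c₁c₂, b = c₂, c = c₃, d = c₄); in particular G_orb ≅ G_symp ⋊ (ℤ/2 × ℤ/2). -/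

import Mathlib

/-- Relations of `G_orb`: the relations (R1)–(R10) of `G_sΔL` together with
`ℓ₁² = ℓ₂² = ℓ∞² = 1`; generators `c₁,c₂,c₃,c₄,ℓ₁,ℓ₂,ℓ∞` are `0,…,6`. -/
def GorbRels : Set (FreeGroup (Fin 7)) :=
  let c₁ : FreeGroup (Fin 7) := FreeGroup.of 0
  let c₂ : FreeGroup (Fin 7) := FreeGroup.of 1
  let c₃ : FreeGroup (Fin 7) := FreeGroup.of 2
  let c₄ : FreeGroup (Fin 7) := FreeGroup.of 3
  let l₁ : FreeGroup (Fin 7) := FreeGroup.of 4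
  let l₂ : FreeGroup (Fin 7) := FreeGroup.of 5
  let li : FreeGroup (Fin 7) := FreeGroup.of 6
  { l₂ * c₁ * l₂⁻¹ * c₁⁻¹,
    l₂⁻¹ * c₂ * l₂ * ((c₂ * c₃ * c₄) * c₃ * (c₂ * c₃ * c₄)⁻¹)⁻¹,
    l₂⁻¹ * c₃ * l₂ * ((c₂ * c₃) * c₄ * (c₂ * c₃)⁻¹)⁻¹,
    l₂⁻¹ * c₄ * l₂ * c₂⁻¹,
    l₁⁻¹ * c₁ * l₁ * ((c₁ * c₂) * c₃ * (c₁ * c₂)⁻¹)⁻¹,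
    l₁⁻¹ * c₂ * l₁ * ((c₁ * c₂) * c₁ * (c₁ * c₂)⁻¹)⁻¹,
    l₁⁻¹ * c₃ * l₁ * (c₁ * c₂ * c₁⁻¹)⁻¹,
    l₁ * c₄ * l₁⁻¹ * c₄⁻¹,
    c₁ * c₂ * c₃ * c₄ * l₁ * l₂ * li,
    l₁ * l₂ * (l₂ * l₁)⁻¹,
    l₁ ^ 2, l₂ ^ 2, li ^ 2 }

abbrev Gorb := PresentedGroup GorbRels

/-- The relations of the group `G_symp` (generators `a = 0`, `b = 1`, `c = 2`, `d = 3`). -/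
def GsympRels : Set (FreeGroup (Fin 4)) :=
  { FreeGroup.of 1 * FreeGroup.of 3 * (FreeGroup.of 3 * FreeGroup.of 1)⁻¹,
    FreeGroup.of 0 * FreeGroup.of 2 * (FreeGroup.of 2 * FreeGroup.of 0)⁻¹,
    FreeGroup.of 0 * FreeGroup.of 1 * FreeGroup.of 0 *
      (FreeGroup.of 1 * FreeGroup.of 0 * FreeGroup.of 1)⁻¹,
    FreeGroup.of 2 * FreeGroup.of 1 * FreeGroup.of 2 *
      (FreeGroup.of 1 * FreeGroup.of 2 * FreeGroup.of 1)⁻¹,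
    FreeGroup.of 2 * FreeGroup.of 3 * FreeGroup.of 2 *
      (FreeGroup.of 3 * FreeGroup.of 2 * FreeGroup.of 3)⁻¹,
    (FreeGroup.of 1 * FreeGroup.of 0 * FreeGroup.of 2 * FreeGroup.of 3) ^ 2 }

abbrev Gsymp := PresentedGroup GsympRels

namespace GorbW

def X : Gorb := PresentedGroup.of 0
def Y : Gorb := PresentedGroup.of 1
def Z : Gorb := PresentedGroup.of 2
def W : Gorb := PresentedGroup.of 3
def P : Gorb := PresentedGroup.of 4
def Q : Gorb := PresentedGroup.of 5
def R : Gorb := PresentedGroup.of 6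

lemma relq (r : FreeGroup (Fin 7)) (h : r ∈ GorbRels) : PresentedGroup.mk GorbRels r = 1 :=
  (QuotientGroup.eq_one_iff _).mpr (Subgroup.subset_normalClosure h)

lemma hp2 : P * P = 1 := by
  have := relq _ (show _ ∈ GorbRels by right;right;right;right;right;right;right;right;right;right;left;rfl)
  simpa [P, PresentedGroup.of, pow_two] using this

lemma hq2 : Q * Q = 1 := by
  have := relq _ (show _ ∈ GorbRels by right;right;right;right;right;right;right;right;right;right;right;left;rfl)
  simpa [Q, PresentedGroup.of, pow_two] using this

lemma hr2 : R * R = 1 := by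
  have := relq _ (show _ ∈ GorbRels by right;right;right;right;right;right;right;right;right;right;right;right;rfl)
  simpa [R, PresentedGroup.of, pow_two] using this

lemma hPinv : P⁻¹ = P := inv_eq_of_mul_eq_one_right hp2
lemma hQinv : Q⁻¹ = Q := inv_eq_of_mul_eq_one_right hq2

lemma rpq : P * Q = Q * P := by
  have := relq _ (show _ ∈ GorbRels by right;right;right;right;right;right;right;right;right;left;rfl)
  simp only [map_mul, map_inv] at this
  exact mul_inv_eq_one.mp this

lemma rr9 : X*Y*Z*W*P*Q*R = 1 := by
  have := relq _ (show _ ∈ GorbRels by right;right;right;right;right;right;right;right;left;rfl)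
  simpa [X,Y,Z,W,P,Q,R, PresentedGroup.of] using this

/-- conjugation by P -/
def σp : Gorb →* Gorb := (MulAut.conj P).toMonoidHom
/-- conjugation by Q -/
def σq : Gorb →* Gorb := (MulAut.conj Q).toMonoidHom

lemma σp_apply (g : Gorb) : σp g = P * g * P⁻¹ := rfl
lemma σq_apply (g : Gorb) : σq g = Q * g * Q⁻¹ := rfl

lemma sqX : σq X = X := by
  have := relq _ (show _ ∈ GorbRels by left; rfl)
  simp only [map_mul, map_inv] at this
  exact mul_inv_eq_one.mp this

lemma sqY : σq Y = (Y*Z*W) * Z * (Y*Z*W)⁻¹ := by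
  have h := relq _ (show _ ∈ GorbRels by right;left;rfl)
  simp only [map_mul, map_inv] at h
  have h2 : Q⁻¹*Y*Q = (Y*Z*W)*Z*(Y*Z*W)⁻¹ := mul_inv_eq_one.mp h
  show Q*Y*Q⁻¹ = _
  rw [hQinv]; rw [hQinv] at h2; exact h2

lemma sqZ : σq Z = (Y*Z) * W * (Y*Z)⁻¹ := by
  have h := relq _ (show _ ∈ GorbRels by right;right;left;rfl)
  simp only [map_mul, map_inv] at h
  have h2 : Q⁻¹*Z*Q = (Y*Z)*W*(Y*Z)⁻¹ := mul_inv_eq_one.mp h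
  show Q*Z*Q⁻¹ = _
  rw [hQinv]; rw [hQinv] at h2; exact h2

lemma sqW : σq W = Y := by
  have h := relq _ (show _ ∈ GorbRels by right;right;right;left;rfl)
  simp only [map_mul, map_inv] at h
  have h2 : Q⁻¹*W*Q = Y := mul_inv_eq_one.mp h
  show Q*W*Q⁻¹ = _
  rw [hQinv]; rw [hQinv] at h2; exact h2

lemma spX : σp X = (X*Y) * Z * (X*Y)⁻¹ := by
  have h := relq _ (show _ ∈ GorbRels by right;right;right;right;left;rfl)
  simp only [map_mul, map_inv] at h
  have h2 : P⁻¹*X*P = (X*Y)*Z*(X*Y)⁻¹ := mul_inv_eq_one.mp h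
  show P*X*P⁻¹ = _
  rw [hPinv]; rw [hPinv] at h2; exact h2

lemma spY : σp Y = (X*Y) * X * (X*Y)⁻¹ := by
  have h := relq _ (show _ ∈ GorbRels by right;right;right;right;right;left;rfl)
  simp only [map_mul, map_inv] at h
  have h2 : P⁻¹*Y*P = (X*Y)*X*(X*Y)⁻¹ := mul_inv_eq_one.mp h
  show P*Y*P⁻¹ = _
  rw [hPinv]; rw [hPinv] at h2; exact h2

lemma spZ : σp Z = X*Y*X⁻¹ := by
  have h := relq _ (show _ ∈ GorbRels by right;right;right;right;right;right;left;rfl)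
  simp only [map_mul, map_inv] at h
  have h2 : P⁻¹*Z*P = X*Y*X⁻¹ := mul_inv_eq_one.mp h
  show P*Z*P⁻¹ = _
  rw [hPinv]; rw [hPinv] at h2; exact h2

lemma spW : σp W = W := by
  have h := relq _ (show _ ∈ GorbRels by right;right;right;right;right;right;right;left;rfl)
  simp only [map_mul, map_inv] at h
  exact mul_inv_eq_one.mp h

lemma spq (g : Gorb) : σp (σq g) = σq (σp g) := by
  show P*(Q*g*Q⁻¹)*P⁻¹ = Q*(P*g*P⁻¹)*Q⁻¹
  rw [hPinv, hQinv]
  calc P*(Q*g*Q)*P = (P*Q)*g*(Q*P) := by group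
  _ = (Q*P)*g*(Q*P) := by rw [rpq]
  _ = (Q*P)*g*(P*Q) := by nth_rewrite 2 [← rpq]; rfl
  _ = Q*(P*g*P)*Q := by group

lemma sqsq (g : Gorb) : σq (σq g) = g := by
  show Q*(Q*g*Q⁻¹)*Q⁻¹ = g
  rw [hQinv]
  calc Q*(Q*g*Q)*Q = (Q*Q)*g*(Q*Q) := by group
  _ = g := by rw [hq2]; group

lemma spsp (g : Gorb) : σp (σp g) = g := by
  show P*(P*g*P⁻¹)*P⁻¹ = g
  rw [hPinv]
  calc P*(P*g*P)*P = (P*P)*g*(P*P) := by group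
  _ = g := by rw [hp2]; group

-- τq(Y) = W
lemma sqY' : σq Y = W := by
  rw [← sqW, sqsq]

-- σp fixes Y, i.e. (xy)x(xy)⁻¹ = y
lemma spY' : σp Y = Y := by
  have h := spq W
  rw [sqW, spW, sqW] at h
  exact h

lemma hS3 : (X*Y) * X * (X*Y)⁻¹ = Y := by rw [← spY]; exact spY'

lemma braid_xy : X*Y*X = Y*X*Y := by
  calc X*Y*X = ((X*Y)*X*(X*Y)⁻¹)*(X*Y) := by group
  _ = Y*(X*Y) := by rw [hS3]
  _ = Y*X*Y := by group

lemma hxiyx : X⁻¹*Y*X = Y*X*Y⁻¹ := by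
  calc X⁻¹*Y*X = X⁻¹*(Y*X*Y)*Y⁻¹ := by group
  _ = X⁻¹*(X*Y*X)*Y⁻¹ := by rw [← braid_xy]
  _ = Y*X*Y⁻¹ := by group

lemma hxyx : X*Y*X⁻¹ = Y⁻¹*X*Y := by
  calc X*Y*X⁻¹ = Y⁻¹*((Y*X*Y)*X⁻¹) := by group
  _ = Y⁻¹*((X*Y*X)*X⁻¹) := by rw [braid_xy]
  _ = Y⁻¹*X*Y := by group

lemma hS1 : Y*W = W*Y := by
  have e1 : σp ((Y*Z)*W*(Y*Z)⁻¹) = (X*Y)*W*(X*Y)⁻¹ := by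
    simp only [map_mul, map_inv, spY, spZ, spW]
    group
  have e2 : σq (X*Y*X⁻¹) = X*W*X⁻¹ := by
    simp only [map_mul, map_inv, sqX, sqY']
  have h := spq Z
  rw [sqZ, spZ, e1, e2] at h
  have h2 : Y*W*Y⁻¹ = W := by
    calc Y*W*Y⁻¹ = X⁻¹*((X*Y)*W*(X*Y)⁻¹)*X := by group
    _ = X⁻¹*(X*W*X⁻¹)*X := by rw [h]
    _ = W := by group
  calc Y*W = (Y*W*Y⁻¹)*Y := by group
  _ = W*Y := by rw [h2]

lemma hS1inv : Y⁻¹*W⁻¹ = W⁻¹*Y⁻¹ := by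
  have := congrArg (·⁻¹) hS1
  simpa [mul_inv_rev] using this.symm

lemma hS5 : Z*W*Z = W*Z*W := by
  have e2 : σq ((X*Y)*Z*(X*Y)⁻¹) = (X*(W*Y))*(Z*W*Z⁻¹)*(Y⁻¹*W⁻¹)*X⁻¹ := by
    simp only [map_mul, map_inv, sqX, sqY', sqZ]
    group
  have h := spq X
  rw [sqX, spX, e2] at h
  -- h : (X*Y)*Z*(X*Y)⁻¹ = (X*(W*Y))*(Z*W*Z⁻¹)*(Y⁻¹*W⁻¹)*X⁻¹
  rw [← hS1, hS1inv] at h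
  -- h : (X*Y)*Z*(X*Y)⁻¹ = (X*(Y*W))*(Z*W*Z⁻¹)*(W⁻¹*Y⁻¹)*X⁻¹
  have h5 : Z = W*(Z*W*Z⁻¹)*W⁻¹ := by
    calc Z = (X*Y)⁻¹*((X*Y)*Z*(X*Y)⁻¹)*(X*Y) := by group
    _ = (X*Y)⁻¹*((X*(Y*W))*(Z*W*Z⁻¹)*(W⁻¹*Y⁻¹)*X⁻¹)*(X*Y) := by rw [h]
    _ = W*(Z*W*Z⁻¹)*W⁻¹ := by group
  nth_rewrite 1 [h5]
  group

lemma hS5inv : W⁻¹*Z⁻¹*W⁻¹ = Z⁻¹*W⁻¹*Z⁻¹ := by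
  have := congrArg (·⁻¹) hS5
  simpa [mul_inv_rev, mul_assoc] using this.symm

lemma keyWZ : W*(Z*W*Z⁻¹) = Z*W := by
  calc W*(Z*W*Z⁻¹) = (W*Z*W)*Z⁻¹ := by group
  _ = (Z*W*Z)*Z⁻¹ := by rw [← hS5]
  _ = Z*W := by group

lemma keyZW : Z*W⁻¹*Z⁻¹ = W⁻¹*Z⁻¹*W := by
  calc Z*W⁻¹*Z⁻¹ = Z*(W⁻¹*Z⁻¹*W⁻¹)*W := by group
  _ = Z*(Z⁻¹*W⁻¹*Z⁻¹)*W := by rw [hS5inv]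
  _ = W⁻¹*Z⁻¹*W := by group

lemma hS4 : Y*Z*Y = Z*Y*Z := by
  have e1 : σq ((Y*Z)*W*(Y*Z)⁻¹) = (W*Y)*((Z*W*Z⁻¹)*(Y*((Z*W⁻¹*Z⁻¹)*(Y⁻¹*W⁻¹)))) := by
    simp only [map_mul, map_inv, sqY', sqZ, sqW]
    group
  have h := sqsq Z
  rw [sqZ, e1] at h
  rw [keyZW, ← hS1] at h
  -- h : (Y*W)*((Z*W*Z⁻¹)*(Y*((W⁻¹*Z⁻¹*W)*(Y⁻¹*W⁻¹)))) = Z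
  have h2 : Y*(W*(Z*W*Z⁻¹))*(Y*W⁻¹)*(Z⁻¹*(W*Y⁻¹))*W⁻¹ = Z :=
    (show Y*(W*(Z*W*Z⁻¹))*(Y*W⁻¹)*(Z⁻¹*(W*Y⁻¹))*W⁻¹
        = Y*W*(Z*W*Z⁻¹*(Y*(W⁻¹*Z⁻¹*W*(Y⁻¹*W⁻¹)))) by group).trans h
  rw [keyWZ] at h2
  -- h2 : Y*(Z*W)*(Y*W⁻¹)*(Z⁻¹*(W*Y⁻¹))*W⁻¹ = Z
  have hYWi : Y*W⁻¹ = W⁻¹*Y := by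
    calc Y*W⁻¹ = W⁻¹*(W*Y)*W⁻¹ := by group
    _ = W⁻¹*(Y*W)*W⁻¹ := by rw [hS1]
    _ = W⁻¹*Y := by group
  have hWYi : W*Y⁻¹ = Y⁻¹*W := by
    calc W*Y⁻¹ = Y⁻¹*(Y*W)*Y⁻¹ := by group
    _ = Y⁻¹*(W*Y)*Y⁻¹ := by rw [hS1]
    _ = Y⁻¹*W := by group
  rw [hYWi, hWYi] at h2
  -- h2 : Y*(Z*W)*(W⁻¹*Y)*(Z⁻¹*(Y⁻¹*W))*W⁻¹ = Z
  have h3 : Y*Z*Y*Z⁻¹*Y⁻¹ = Z :=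
    (show Y*Z*Y*Z⁻¹*Y⁻¹ = Y*(Z*W)*(W⁻¹*Y)*(Z⁻¹*(Y⁻¹*W))*W⁻¹ by group).trans h2
  calc Y*Z*Y = (Y*Z*Y*Z⁻¹*Y⁻¹)*(Y*Z) := by group
  _ = Z*(Y*Z) := by rw [h3]
  _ = Z*Y*Z := by group

-- braid between Z and X, from σp ∘ σp = id on Y
lemma braid_zx : Z*X*Z = X*Z*X := by
  have e1 : σp ((X*Y)*X*(X*Y)⁻¹) = (X*Y)*(Z*X*Z*X⁻¹*Z⁻¹)*(X*Y)⁻¹ := by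
    simp only [map_mul, map_inv, spX, spY]
    group
  have h := spsp Y
  rw [spY, e1] at h
  have h2 : Z*X*Z*X⁻¹*Z⁻¹ = (X*Y)⁻¹*Y*(X*Y) := by
    calc Z*X*Z*X⁻¹*Z⁻¹ = (X*Y)⁻¹*((X*Y)*(Z*X*Z*X⁻¹*Z⁻¹)*(X*Y)⁻¹)*(X*Y) := by group
    _ = (X*Y)⁻¹*Y*(X*Y) := by rw [h]
  have h3 : (X*Y)⁻¹*Y*(X*Y) = X := by
    calc (X*Y)⁻¹*Y*(X*Y) = Y⁻¹*(X⁻¹*Y*X)*Y := by group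
    _ = Y⁻¹*(Y*X*Y⁻¹)*Y := by rw [hxiyx]
    _ = X := by group
  rw [h3] at h2
  calc Z*X*Z = (Z*X*Z*X⁻¹*Z⁻¹)*(Z*X) := by group
  _ = X*(Z*X) := by rw [h2]
  _ = X*Z*X := by group

lemma hzxz : Z*X*Z⁻¹ = X⁻¹*Z*X := by
  calc Z*X*Z⁻¹ = X⁻¹*((X*Z*X)*Z⁻¹) := by group
  _ = X⁻¹*((Z*X*Z)*Z⁻¹) := by rw [braid_zx]
  _ = X⁻¹*Z*X := by group

-- F1 : (X*Y)*(Z*X*Z⁻¹)*(X*Y)⁻¹ = Z, from σp ∘ σp = id on Z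
lemma hF1 : (X*Y)*(Z*X*Z⁻¹)*(X*Y)⁻¹ = Z := by
  have e1 : σp (X*Y*X⁻¹) = (X*Y)*(Z*X*Z⁻¹)*(X*Y)⁻¹ := by
    simp only [map_mul, map_inv, spX, spY]
    group
  have h := spsp Z
  rw [spZ, e1] at h
  exact h

-- Y commutes with X⁻¹*Z*X
lemma hYcomm : Y*(X⁻¹*Z*X) = (X⁻¹*Z*X)*Y := by
  have h := hF1
  rw [hzxz] at h
  -- h : (X*Y)*(X⁻¹*Z*X)*(X*Y)⁻¹ = Z
  have h2 : Y*(X⁻¹*Z*X)*Y⁻¹ = X⁻¹*Z*X := by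
    calc Y*(X⁻¹*Z*X)*Y⁻¹ = X⁻¹*((X*Y)*(X⁻¹*Z*X)*(X*Y)⁻¹)*X := by group
    _ = X⁻¹*Z*X := by rw [h]
  calc Y*(X⁻¹*Z*X) = (Y*(X⁻¹*Z*X)*Y⁻¹)*Y := by group
  _ = (X⁻¹*Z*X)*Y := by rw [h2]

lemma hS2 : (Y⁻¹*X*Y)*Z = Z*(Y⁻¹*X*Y) := by
  have h : Z*(X*Y*X⁻¹) = (X*Y*X⁻¹)*Z := by
    calc Z*(X*Y*X⁻¹) = X*((X⁻¹*Z*X)*Y)*X⁻¹ := by group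
    _ = X*(Y*(X⁻¹*Z*X))*X⁻¹ := by rw [hYcomm]
    _ = (X*Y*X⁻¹)*Z := by group
  rw [hxyx] at h
  exact h.symm


lemma hfixq : σq (X*Y*Z*W) = X*Y*Z*W := by
  simp only [map_mul, map_inv, sqX, sqY, sqZ, sqW]; group

lemma hfixp : σp (X*Y*Z*W) = X*Y*Z*W := by
  simp only [map_mul, map_inv, spX, spY, spZ, spW]; group

lemma hRvalue : R = (X*Y*Z*W*P*Q)⁻¹ := (inv_eq_of_mul_eq_one_right rr9).symm

lemma hS6 : (X*Y*Z*W)*(X*Y*Z*W) = 1 := by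
  have h : (X*Y*Z*W*P*Q)*(X*Y*Z*W*P*Q) = 1 := by
    have h2 := hr2
    rw [hRvalue] at h2
    calc (X*Y*Z*W*P*Q)*(X*Y*Z*W*P*Q) = ((X*Y*Z*W*P*Q)⁻¹*(X*Y*Z*W*P*Q)⁻¹)⁻¹ := by group
    _ = 1 := by rw [h2]; group
  have e1 : (X*Y*Z*W*P*Q)*(X*Y*Z*W*P*Q)
      = (X*Y*Z*W)*(P*(Q*(X*Y*Z*W)*Q⁻¹)*Q)*(P*Q) := by group
  rw [e1] at h
  rw [show Q*(X*Y*Z*W)*Q⁻¹ = X*Y*Z*W from hfixq] at h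
  have e2 : (X*Y*Z*W)*(P*(X*Y*Z*W)*Q)*(P*Q)
      = (X*Y*Z*W)*((P*(X*Y*Z*W)*P⁻¹)*(P*Q*(P*Q))) := by group
  rw [e2, show P*(X*Y*Z*W)*P⁻¹ = X*Y*Z*W from hfixp] at h
  have e3 : P*Q*(P*Q) = 1 := by
    calc P*Q*(P*Q) = P*(Q*P)*Q := by group
    _ = P*(P*Q)*Q := by rw [rpq]
    _ = (P*P)*(Q*Q) := by group
    _ = 1 := by rw [hp2, hq2, mul_one]
  rw [e3, mul_one] at h
  exact (show (X*Y*Z*W)*(X*Y*Z*W) = (X*Y*Z*W)*((X*Y*Z*W)) by group).trans h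

lemma cP_a : σp (Y⁻¹*X*Y) = Z := by
  have e1 : σp (Y⁻¹*X*Y) = (X*Y)*(X⁻¹*Z*X)*(X*Y)⁻¹ := by
    simp only [map_mul, map_inv, spX, spY]; group
  rw [e1, ← hzxz]
  exact hF1

lemma cP_c : σp Z = Y⁻¹*X*Y := by rw [spZ, hxyx]

lemma cQ_a : σq (Y⁻¹*X*Y) = W⁻¹*X*W := by
  simp only [map_mul, map_inv, sqX, sqY']

end GorbW


namespace GsympW

def A : Gsymp := PresentedGroup.of 0
def B : Gsymp := PresentedGroup.of 1
def C : Gsymp := PresentedGroup.of 2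
def D : Gsymp := PresentedGroup.of 3

lemma relq (r : FreeGroup (Fin 4)) (h : r ∈ GsympRels) : PresentedGroup.mk GsympRels r = 1 :=
  (QuotientGroup.eq_one_iff _).mpr (Subgroup.subset_normalClosure h)

lemma hbd : B*D = D*B := by
  have := relq _ (show _ ∈ GsympRels by left; rfl)
  simp only [map_mul, map_inv] at this
  exact mul_inv_eq_one.mp this

lemma hac : A*C = C*A := by
  have := relq _ (show _ ∈ GsympRels by right; left; rfl)
  simp only [map_mul, map_inv] at this
  exact mul_inv_eq_one.mp this

lemma haba : A*B*A = B*A*B := by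
  have := relq _ (show _ ∈ GsympRels by right; right; left; rfl)
  simp only [map_mul, map_inv] at this
  exact mul_inv_eq_one.mp this

lemma hcbc : C*B*C = B*C*B := by
  have := relq _ (show _ ∈ GsympRels by right; right; right; left; rfl)
  simp only [map_mul, map_inv] at this
  exact mul_inv_eq_one.mp this

lemma hcdc : C*D*C = D*C*D := by
  have := relq _ (show _ ∈ GsympRels by right; right; right; right; left; rfl)
  simp only [map_mul, map_inv] at this
  exact mul_inv_eq_one.mp this

lemma hDel : (B*A*C*D)*(B*A*C*D) = 1 := by
  have := relq _ (show _ ∈ GsympRels by right; right; right; right; right; rfl)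
  simpa [A,B,C,D, PresentedGroup.of, pow_two] using this

-- commuting variants
lemma hdb : D*B = B*D := hbd.symm
lemma hbdbi : B⁻¹*D*B = D := by
  calc B⁻¹*D*B = B⁻¹*(D*B) := by group
  _ = B⁻¹*(B*D) := by rw [hdb]
  _ = D := by group
lemma hdbi : D*B⁻¹ = B⁻¹*D := by
  calc D*B⁻¹ = B⁻¹*(B*D)*B⁻¹ := by group
  _ = B⁻¹*(D*B)*B⁻¹ := by rw [hbd]
  _ = B⁻¹*D := by group
lemma hdbi2 : D⁻¹*B = B*D⁻¹ := by
  calc D⁻¹*B = D⁻¹*(B*D)*D⁻¹ := by group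
  _ = D⁻¹*(D*B)*D⁻¹ := by rw [hbd]
  _ = B*D⁻¹ := by group
lemma hbdi2 : B⁻¹*D = D*B⁻¹ := hdbi.symm
lemma hbdinv : B⁻¹*D⁻¹ = D⁻¹*B⁻¹ := by
  have := congrArg (·⁻¹) hbd
  simpa [mul_inv_rev] using this.symm
lemma hdbd : D*B*D⁻¹ = B := by
  calc D*B*D⁻¹ = (D*B)*D⁻¹ := by group
  _ = (B*D)*D⁻¹ := by rw [hdb]
  _ = B := by group
lemma hacai : A*C*A⁻¹ = C := by
  calc A*C*A⁻¹ = (A*C)*A⁻¹ := by group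
  _ = (C*A)*A⁻¹ := by rw [hac]
  _ = C := by group
lemma hacin : A*C⁻¹*A⁻¹ = C⁻¹ := by
  calc A*C⁻¹*A⁻¹ = (A*C*A⁻¹)⁻¹ := by group
  _ = C⁻¹ := by rw [hacai]
lemma hcai : C*A⁻¹ = A⁻¹*C := by
  calc C*A⁻¹ = A⁻¹*(A*C)*A⁻¹ := by group
  _ = A⁻¹*(C*A)*A⁻¹ := by rw [hac]
  _ = A⁻¹*C := by group
lemma hbabi : B*A*B⁻¹ = A⁻¹*B*A := by
  calc B*A*B⁻¹ = A⁻¹*(A*B*A)*B⁻¹ := by group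
  _ = A⁻¹*(B*A*B)*B⁻¹ := by rw [haba]
  _ = A⁻¹*B*A := by group
lemma hcbci : C⁻¹*B*C = B*C*B⁻¹ := by
  calc C⁻¹*B*C = C⁻¹*(B*C*B)*B⁻¹ := by group
  _ = C⁻¹*(C*B*C)*B⁻¹ := by rw [← hcbc]
  _ = B*C*B⁻¹ := by group
lemma hdcd1 : D*C*D⁻¹ = C⁻¹*D*C := by
  have h : C*(D*C*D⁻¹) = D*C := by
    calc C*(D*C*D⁻¹) = (C*D*C)*D⁻¹ := by group
    _ = (D*C*D)*D⁻¹ := by rw [hcdc]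
    _ = D*C := by group
  calc D*C*D⁻¹ = C⁻¹*(C*(D*C*D⁻¹)) := by group
  _ = C⁻¹*(D*C) := by rw [h]
  _ = C⁻¹*D*C := by group
lemma hcdci : C*D⁻¹*C⁻¹ = D⁻¹*C⁻¹*D := by
  have h1 : D*(C*D⁻¹*C⁻¹) = C⁻¹*D := by
    calc D*(C*D⁻¹*C⁻¹) = (D*C*D⁻¹)*C⁻¹ := by group
    _ = (C⁻¹*D*C)*C⁻¹ := by rw [hdcd1]
    _ = C⁻¹*D := by group
  calc C*D⁻¹*C⁻¹ = D⁻¹*(D*(C*D⁻¹*C⁻¹)) := by group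
  _ = D⁻¹*(C⁻¹*D) := by rw [h1]
  _ = D⁻¹*C⁻¹*D := by group
lemma hcdc3 : C⁻¹*D*C = D*C*D⁻¹ := hdcd1.symm
lemma hcdc2 : C*D*C⁻¹ = D⁻¹*C*D := by
  have h : D*(C*D*C⁻¹) = C*D := by
    calc D*(C*D*C⁻¹) = (D*C*D)*C⁻¹ := by group
    _ = (C*D*C)*C⁻¹ := by rw [← hcdc]
    _ = C*D := by group
  calc C*D*C⁻¹ = D⁻¹*(D*(C*D*C⁻¹)) := by group
  _ = D⁻¹*(C*D) := by rw [h]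
  _ = D⁻¹*C*D := by group

lemma L_bacb : (B*A*C*B)*A = C*(B*A*C*B) := by
  calc (B*A*C*B)*A = (B*A*C*(B*A*B⁻¹))*B := by group
  _ = (B*A*C*(A⁻¹*B*A))*B := by rw [hbabi]
  _ = B*A*(C*A⁻¹)*B*A*B := by group
  _ = B*A*(A⁻¹*C)*B*A*B := by rw [hcai]
  _ = (B*C*B)*(A*B) := by group
  _ = (C*B*C)*(A*B) := by rw [← hcbc]
  _ = C*B*(C*A)*B := by group
  _ = C*B*(A*C)*B := by rw [← hac]
  _ = C*(B*A*C*B) := by group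

lemma hDA' : (B*A*C*B)⁻¹*(D⁻¹*C⁻¹) = D*A := by
  have h1 : (B*A*C*B)*((D*A)*(C*D)) = 1 := by
    calc (B*A*C*B)*((D*A)*(C*D)) = (B*A*C)*(B*D)*(A*C*D) := by group
    _ = (B*A*C)*(D*B)*(A*C*D) := by rw [hbd]
    _ = (B*A*C*D)*(B*A*C*D) := by group
    _ = 1 := hDel
  have h2 : (D*A)*(C*D) = (B*A*C*B)⁻¹ := (inv_eq_of_mul_eq_one_right h1).symm
  calc (B*A*C*B)⁻¹*(D⁻¹*C⁻¹) = ((D*A)*(C*D))*((C*D)⁻¹) := by rw [h2]; group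
  _ = D*A := by group

lemma hQc : A*(B*A*C*B)⁻¹ = (B*A*C*B)⁻¹*C := by
  calc A*(B*A*C*B)⁻¹ = (B*A*C*B)⁻¹*((B*A*C*B)*A)*(B*A*C*B)⁻¹ := by group
  _ = (B*A*C*B)⁻¹*(C*(B*A*C*B))*(B*A*C*B)⁻¹ := by rw [L_bacb]
  _ = (B*A*C*B)⁻¹*C := by group

lemma L1 : A*D*A = D*A*D := by
  calc A*D*A = A*(D*A) := by group
  _ = A*((B*A*C*B)⁻¹*(D⁻¹*C⁻¹)) := by rw [hDA']
  _ = (A*(B*A*C*B)⁻¹)*(D⁻¹*C⁻¹) := by group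
  _ = ((B*A*C*B)⁻¹*C)*(D⁻¹*C⁻¹) := by rw [hQc]
  _ = (B*A*C*B)⁻¹*(C*D⁻¹*C⁻¹) := by group
  _ = (B*A*C*B)⁻¹*(D⁻¹*C⁻¹*D) := by rw [hcdci]
  _ = ((B*A*C*B)⁻¹*(D⁻¹*C⁻¹))*D := by group
  _ = (D*A)*D := by rw [hDA']
  _ = D*A*D := by group

lemma hL1a : D⁻¹*A*D = A*D*A⁻¹ := by
  have h : D*(A*D*A⁻¹) = A*D := by
    calc D*(A*D*A⁻¹) = (D*A*D)*A⁻¹ := by group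
    _ = (A*D*A)*A⁻¹ := by rw [← L1]
    _ = A*D := by group
  calc D⁻¹*A*D = D⁻¹*(A*D) := by group
  _ = D⁻¹*(D*(A*D*A⁻¹)) := by rw [h]
  _ = A*D*A⁻¹ := by group

lemma hL1b : D*A*D*A⁻¹ = A*D := by
  calc D*A*D*A⁻¹ = (D*A*D)*A⁻¹ := by group
  _ = (A*D*A)*A⁻¹ := by rw [← L1]
  _ = A*D := by group

-- abbreviations for the images of a and c under TQ
lemma hA_ : D⁻¹*(B*A*B⁻¹)*D = B*(A*D*A⁻¹)*B⁻¹ := by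
  calc D⁻¹*(B*A*B⁻¹)*D = (D⁻¹*B)*A*(B⁻¹*D) := by group
  _ = (B*D⁻¹)*A*(B⁻¹*D) := by rw [hdbi2]
  _ = (B*D⁻¹)*A*(D*B⁻¹) := by rw [hbdi2]
  _ = B*(D⁻¹*A*D)*B⁻¹ := by group
  _ = B*(A*D*A⁻¹)*B⁻¹ := by rw [hL1a]

lemma hC_ : (B*C)*D*(B*C)⁻¹ = B*(C*D*C⁻¹)*B⁻¹ := by group

lemma hADA_CDC : (A*D*A⁻¹)*(C*D*C⁻¹) = (C*D*C⁻¹)*(A*D*A⁻¹) := by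
  rw [show A*D*A⁻¹ = D⁻¹*A*D from hL1a.symm, hcdc2]
  calc (D⁻¹*A*D)*(D⁻¹*C*D) = D⁻¹*(A*C)*D := by group
  _ = D⁻¹*(C*A)*D := by rw [hac]
  _ = (D⁻¹*C*D)*(D⁻¹*A*D) := by group

-- braid of D with B*A*B⁻¹
lemma hxdx : (B*A*B⁻¹)*D*(B*A*B⁻¹) = D*(B*A*B⁻¹)*D := by
  calc (B*A*B⁻¹)*D*(B*A*B⁻¹) = B*A*(B⁻¹*D*B)*A*B⁻¹ := by group
  _ = B*A*(D)*A*B⁻¹ := by rw [hbdbi]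
  _ = B*(A*D*A)*B⁻¹ := by group
  _ = B*(D*A*D)*B⁻¹ := by rw [L1]
  _ = (B*D)*A*(D*B⁻¹) := by group
  _ = (D*B)*A*(D*B⁻¹) := by rw [hbd]
  _ = (D*B)*A*(B⁻¹*D) := by rw [hdbi]
  _ = D*(B*A*B⁻¹)*D := by group

-- braid of D with B*C*B⁻¹
lemma hhdh : (B*C*B⁻¹)*D*(B*C*B⁻¹) = D*(B*C*B⁻¹)*D := by
  calc (B*C*B⁻¹)*D*(B*C*B⁻¹) = B*C*(B⁻¹*D*B)*C*B⁻¹ := by group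
  _ = B*C*(D)*C*B⁻¹ := by rw [hbdbi]
  _ = B*(C*D*C)*B⁻¹ := by group
  _ = B*(D*C*D)*B⁻¹ := by rw [hcdc]
  _ = (B*D)*C*(D*B⁻¹) := by group
  _ = (D*B)*C*(D*B⁻¹) := by rw [hbd]
  _ = (D*B)*C*(B⁻¹*D) := by rw [hdbi]
  _ = D*(B*C*B⁻¹)*D := by group

lemma hdkd : D*(D*C*D⁻¹)*D = (D*C*D⁻¹)*D*(D*C*D⁻¹) := by
  have h1 : D*(D*C*D⁻¹)*D = (D*D)*C := by group
  have h2 : (D*C*D⁻¹)*D*(D*C*D⁻¹) = (D*D)*C := by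
    calc (D*C*D⁻¹)*D*(D*C*D⁻¹) = D*(C*D*C)*D⁻¹ := by group
    _ = D*(D*C*D)*D⁻¹ := by rw [hcdc]
    _ = (D*D)*C := by group
  rw [h1, h2]

-- the six relation checks for TQ
lemma TQ2 : (D⁻¹*(B*A*B⁻¹)*D)*((B*C)*D*(B*C)⁻¹) = ((B*C)*D*(B*C)⁻¹)*(D⁻¹*(B*A*B⁻¹)*D) := by
  rw [hA_, hC_]
  calc (B*(A*D*A⁻¹)*B⁻¹)*(B*(C*D*C⁻¹)*B⁻¹) = B*((A*D*A⁻¹)*(C*D*C⁻¹))*B⁻¹ := by group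
  _ = B*((C*D*C⁻¹)*(A*D*A⁻¹))*B⁻¹ := by rw [hADA_CDC]
  _ = (B*(C*D*C⁻¹)*B⁻¹)*(B*(A*D*A⁻¹)*B⁻¹) := by group

lemma TQ3 : (D⁻¹*(B*A*B⁻¹)*D)*D*(D⁻¹*(B*A*B⁻¹)*D) = D*(D⁻¹*(B*A*B⁻¹)*D)*D := by
  have h1 : (D⁻¹*(B*A*B⁻¹)*D)*D*(D⁻¹*(B*A*B⁻¹)*D)
      = D⁻¹*((B*A*B⁻¹)*D*(B*A*B⁻¹))*D := by group
  have h2 : D*(D⁻¹*(B*A*B⁻¹)*D)*D = D⁻¹*(D*(B*A*B⁻¹)*D)*D := by group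
  rw [h1, h2, hxdx]

lemma TQ4 : ((B*C)*D*(B*C)⁻¹)*D*((B*C)*D*(B*C)⁻¹) = D*((B*C)*D*(B*C)⁻¹)*D := by
  have h1 : ((B*C)*D*(B*C)⁻¹)*D*((B*C)*D*(B*C)⁻¹)
      = (B*C)*(D*(C⁻¹*(B⁻¹*D*B)*C)*D)*(B*C)⁻¹ := by group
  rw [h1, hbdbi, hcdc3, hdkd, ← hcdc3]
  have h2 : D*((B*C)*D*(B*C)⁻¹)*D = (D*B)*(C*D*C⁻¹)*(B⁻¹*D) := by group
  rw [h2, ← hbd, ← hdbi]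
  calc (B*C)*((C⁻¹*D*C)*D*(C⁻¹*D*C))*(B*C)⁻¹ = B*(D*C*D*C⁻¹*D)*B⁻¹ := by group
  _ = (B*D)*(C*D*C⁻¹)*(D*B⁻¹) := by group

lemma TQ5 : ((B*C)*D*(B*C)⁻¹)*B*((B*C)*D*(B*C)⁻¹) = B*((B*C)*D*(B*C)⁻¹)*B := by
  have h1 : ((B*C)*D*(B*C)⁻¹)*B*((B*C)*D*(B*C)⁻¹)
      = (B*C)*(D*(C⁻¹*B*C)*D)*(B*C)⁻¹ := by group
  have h2 : B*((B*C)*D*(B*C)⁻¹)*B = (B*C)*((C⁻¹*B*C)*D*(C⁻¹*B*C))*(B*C)⁻¹ := by group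
  rw [h1, h2, hcbci, hhdh]

lemma hDACB : D*(D⁻¹*(B*A*B⁻¹)*D)*((B*C)*D*(B*C)⁻¹)*B = B*A*C*D := by
  rw [hA_, hC_]
  calc D*(B*(A*D*A⁻¹)*B⁻¹)*(B*(C*D*C⁻¹)*B⁻¹)*B
      = (D*B)*((A*D*A⁻¹)*(C*D*C⁻¹)) := by group
  _ = (B*D)*((A*D*A⁻¹)*(C*D*C⁻¹)) := by rw [hdb]
  _ = B*(D*A*D*A⁻¹)*(C*D*C⁻¹) := by group
  _ = B*(A*D)*(C*D*C⁻¹) := by rw [hL1b]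
  _ = B*A*(D*C*D)*C⁻¹ := by group
  _ = B*A*(C*D*C)*C⁻¹ := by rw [← hcdc]
  _ = B*A*C*D := by group

lemma TQ6 : (D*(D⁻¹*(B*A*B⁻¹)*D)*((B*C)*D*(B*C)⁻¹)*B)*(D*(D⁻¹*(B*A*B⁻¹)*D)*((B*C)*D*(B*C)⁻¹)*B) = 1 := by
  rw [hDACB]; exact hDel

-- W1 : for TQ ∘ TQ = id on c
lemma W1eq : (D*((B*C)*D*(B*C)⁻¹))*B*(D*((B*C)*D*(B*C)⁻¹))⁻¹ = C := by
  calc (D*((B*C)*D*(B*C)⁻¹))*B*(D*((B*C)*D*(B*C)⁻¹))⁻¹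
      = (D*B)*(C*D*C⁻¹)*B*(C*D⁻¹*C⁻¹)*(B⁻¹*D⁻¹) := by group
  _ = (B*D)*(C*D*C⁻¹)*B*(C*D⁻¹*C⁻¹)*(B⁻¹*D⁻¹) := by rw [hdb]
  _ = (B*D)*(D⁻¹*C*D)*B*(C*D⁻¹*C⁻¹)*(B⁻¹*D⁻¹) := by rw [hcdc2]
  _ = (B*D)*(D⁻¹*C*D)*B*(D⁻¹*C⁻¹*D)*(B⁻¹*D⁻¹) := by rw [hcdci]
  _ = (B*D)*(D⁻¹*C*D)*B*(D⁻¹*C⁻¹*D)*(D⁻¹*B⁻¹) := by rw [← hbdinv]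
  _ = B*C*(D*B*D⁻¹)*C⁻¹*B⁻¹ := by group
  _ = B*C*(B)*C⁻¹*B⁻¹ := by rw [hdbd]
  _ = (B*C*B)*(C⁻¹*B⁻¹) := by group
  _ = (C*B*C)*(C⁻¹*B⁻¹) := by rw [← hcbc]
  _ = C := by group

-- W2 : TP (TQ a) = TQ (TP a)
lemma W2eq : D⁻¹*(B*C*B⁻¹)*D = (B*C)*D*(B*C)⁻¹ := by
  rw [hC_]
  calc D⁻¹*(B*C*B⁻¹)*D = (D⁻¹*B)*C*(B⁻¹*D) := by group
  _ = (B*D⁻¹)*C*(B⁻¹*D) := by rw [hdbi2]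
  _ = (B*D⁻¹)*C*(D*B⁻¹) := by rw [hbdi2]
  _ = B*(D⁻¹*C*D)*B⁻¹ := by group
  _ = B*(C*D*C⁻¹)*B⁻¹ := by rw [← hcdc2]

-- W3 : TP (TQ c) = TQ (TP c)
lemma W3eq : (B*A)*D*(B*A)⁻¹ = D⁻¹*(B*A*B⁻¹)*D := by
  rw [hA_]; group

lemma hBCAD : B*C*A*D = B*A*C*D := by
  calc B*C*A*D = B*(C*A)*D := by group
  _ = B*(A*C)*D := by rw [← hac]
  _ = B*A*C*D := by group

end GsympW

namespace GsympW

def fP : Fin 4 → Gsymp := ![C, B, A, D]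
def fQ : Fin 4 → Gsymp := ![D⁻¹*(B*A*B⁻¹)*D, D, (B*C)*D*(B*C)⁻¹, B]

lemma hfP : ∀ r ∈ GsympRels, FreeGroup.lift fP r = 1 := by
  intro r hr
  simp only [GsympRels, Set.mem_insert_iff, Set.mem_singleton_iff] at hr
  rcases hr with rfl | rfl | rfl | rfl | rfl | rfl <;>
    simp only [map_mul, map_inv, map_pow, FreeGroup.lift_apply_of]
  · show B*D*(D*B)⁻¹ = 1
    exact mul_inv_eq_one.mpr hbd
  · show C*A*(A*C)⁻¹ = 1
    exact mul_inv_eq_one.mpr hac.symm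
  · show C*B*C*(B*C*B)⁻¹ = 1
    exact mul_inv_eq_one.mpr hcbc
  · show A*B*A*(B*A*B)⁻¹ = 1
    exact mul_inv_eq_one.mpr haba
  · show A*D*A*(D*A*D)⁻¹ = 1
    exact mul_inv_eq_one.mpr L1
  · show (B*C*A*D)^2 = 1
    rw [pow_two, hBCAD]; exact hDel

lemma hfQ : ∀ r ∈ GsympRels, FreeGroup.lift fQ r = 1 := by
  intro r hr
  simp only [GsympRels, Set.mem_insert_iff, Set.mem_singleton_iff] at hr
  rcases hr with rfl | rfl | rfl | rfl | rfl | rfl <;>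
    simp only [map_mul, map_inv, map_pow, FreeGroup.lift_apply_of]
  · show D*B*(B*D)⁻¹ = 1
    exact mul_inv_eq_one.mpr hdb
  · show (D⁻¹*(B*A*B⁻¹)*D)*((B*C)*D*(B*C)⁻¹)*(((B*C)*D*(B*C)⁻¹)*(D⁻¹*(B*A*B⁻¹)*D))⁻¹ = 1
    exact mul_inv_eq_one.mpr TQ2
  · show (D⁻¹*(B*A*B⁻¹)*D)*D*(D⁻¹*(B*A*B⁻¹)*D)*(D*(D⁻¹*(B*A*B⁻¹)*D)*D)⁻¹ = 1
    exact mul_inv_eq_one.mpr TQ3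
  · show ((B*C)*D*(B*C)⁻¹)*D*((B*C)*D*(B*C)⁻¹)*(D*((B*C)*D*(B*C)⁻¹)*D)⁻¹ = 1
    exact mul_inv_eq_one.mpr TQ4
  · show ((B*C)*D*(B*C)⁻¹)*B*((B*C)*D*(B*C)⁻¹)*(B*((B*C)*D*(B*C)⁻¹)*B)⁻¹ = 1
    exact mul_inv_eq_one.mpr TQ5
  · show (D*(D⁻¹*(B*A*B⁻¹)*D)*((B*C)*D*(B*C)⁻¹)*B)^2 = 1
    rw [pow_two]; exact TQ6

def TP : Gsymp →* Gsymp := PresentedGroup.toGroup hfP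
def TQ : Gsymp →* Gsymp := PresentedGroup.toGroup hfQ

lemma TPa : TP A = C := PresentedGroup.toGroup.of hfP
lemma TPb : TP B = B := PresentedGroup.toGroup.of hfP
lemma TPc : TP C = A := PresentedGroup.toGroup.of hfP
lemma TPd : TP D = D := PresentedGroup.toGroup.of hfP
lemma TQa : TQ A = D⁻¹*(B*A*B⁻¹)*D := PresentedGroup.toGroup.of hfQ
lemma TQb : TQ B = D := PresentedGroup.toGroup.of hfQ
lemma TQc : TQ C = (B*C)*D*(B*C)⁻¹ := PresentedGroup.toGroup.of hfQ
lemma TQd : TQ D = B := PresentedGroup.toGroup.of hfQ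

lemma TPTP : TP.comp TP = MonoidHom.id Gsymp := by
  apply PresentedGroup.ext
  intro x
  fin_cases x
  · show TP (TP A) = A
    rw [TPa, TPc]
  · show TP (TP B) = B
    rw [TPb, TPb]
  · show TP (TP C) = C
    rw [TPc, TPa]
  · show TP (TP D) = D
    rw [TPd, TPd]

lemma TQTQ : TQ.comp TQ = MonoidHom.id Gsymp := by
  apply PresentedGroup.ext
  intro x
  fin_cases x
  · show TQ (TQ A) = A
    rw [TQa]
    simp only [map_mul, map_inv, TQa, TQb, TQd]
    group
  · show TQ (TQ B) = B
    rw [TQb, TQd]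
  · show TQ (TQ C) = C
    rw [TQc]
    simp only [map_mul, map_inv, TQb, TQc, TQd]
    exact W1eq
  · show TQ (TQ D) = D
    rw [TQd, TQb]

lemma TPTQ : TP.comp TQ = TQ.comp TP := by
  apply PresentedGroup.ext
  intro x
  fin_cases x
  · show TP (TQ A) = TQ (TP A)
    rw [TQa, TPa]
    simp only [map_mul, map_inv, TPa, TPb, TPd]
    rw [TQc]
    exact W2eq
  · show TP (TQ B) = TQ (TP B)
    rw [TQb, TPb, TPd, TQb]
  · show TP (TQ C) = TQ (TP C)
    rw [TQc, TPc]
    simp only [map_mul, map_inv, TPb, TPc, TPd]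
    rw [TQa]
    exact W3eq
  · show TP (TQ D) = TQ (TP D)
    rw [TQd, TPd, TPb, TQd]

lemma hbdb2 : B*D*B⁻¹ = D := by
  calc B*D*B⁻¹ = (B*D)*B⁻¹ := by group
  _ = (D*B)*B⁻¹ := by rw [hbd]
  _ = D := by group

lemma E2g : B*C*D*C*(B*C*D)⁻¹ = D := by
  calc B*C*D*C*(B*C*D)⁻¹ = B*(C*D*C)*D⁻¹*C⁻¹*B⁻¹ := by group
  _ = B*(D*C*D)*D⁻¹*C⁻¹*B⁻¹ := by rw [hcdc]
  _ = B*D*B⁻¹ := by group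
  _ = D := hbdb2

lemma E5g : B*A*B⁻¹*B*C*(B*A*B⁻¹*B)⁻¹ = B*C*B⁻¹ := by
  calc B*A*B⁻¹*B*C*(B*A*B⁻¹*B)⁻¹ = B*(A*C*A⁻¹)*B⁻¹ := by group
  _ = B*C*B⁻¹ := by rw [hacai]

lemma E6g : B*A*B⁻¹*B*(B*A*B⁻¹)*(B*A*B⁻¹*B)⁻¹ = B := by
  calc B*A*B⁻¹*B*(B*A*B⁻¹)*(B*A*B⁻¹*B)⁻¹ = B*(A*B*A)*B⁻¹*A⁻¹*B⁻¹ := by group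
  _ = B*(B*A*B)*B⁻¹*A⁻¹*B⁻¹ := by rw [haba]
  _ = B := by group

lemma E7g : (B*A*B⁻¹)*B*(B*A*B⁻¹)⁻¹ = A := by
  calc (B*A*B⁻¹)*B*(B*A*B⁻¹)⁻¹ = (B*A*B)*A⁻¹*B⁻¹ := by group
  _ = (A*B*A)*A⁻¹*B⁻¹ := by rw [← haba]
  _ = A := by group

lemma LDelta : (B*A*C*D) * TP (TQ (B*A*C*D)) = 1 := by
  rw [show TQ (B*A*C*D) = D*(D⁻¹*(B*A*B⁻¹)*D)*((B*C)*D*(B*C)⁻¹)*B from by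
    simp only [map_mul, map_inv, TQa, TQb, TQc, TQd]]
  rw [show TP (D*(D⁻¹*(B*A*B⁻¹)*D)*((B*C)*D*(B*C)⁻¹)*B)
      = D*(D⁻¹*(B*C*B⁻¹)*D)*((B*A)*D*(B*A)⁻¹)*B from by
    simp only [map_mul, map_inv, TPa, TPb, TPc, TPd]]
  calc (B*A*C*D)*(D*(D⁻¹*(B*C*B⁻¹)*D)*((B*A)*D*(B*A)⁻¹)*B)
      = (B*A*C*D)*(B*C*(B⁻¹*D*B)*(A*D*A⁻¹)) := by group
  _ = (B*A*C*D)*(B*C*D*(A*D*A⁻¹)) := by rw [hbdbi]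
  _ = (B*A*C*D)*(B*C*D*(D⁻¹*A*D)) := by rw [← hL1a]
  _ = (B*A*C*D)*(B*C*A*D) := by group
  _ = (B*A*C*D)*(B*A*C*D) := by rw [hBCAD]
  _ = 1 := hDel

end GsympW

open Multiplicative

lemma pow_mod_two' {G : Type*} [Group G] {p : G} (hp : p*p = 1) (n : ℕ) : p ^ (n % 2) = p ^ n := by
  conv_rhs => rw [← Nat.div_add_mod n 2]
  rw [pow_add, pow_mul, show p^2 = 1 by rw [pow_two, hp], one_pow, one_mul]

def kleinHom {G : Type*} [Group G] (p q : G) (hp : p*p=1) (hq : q*q=1) (hpq : p*q=q*p) :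
    Multiplicative (ZMod 2 × ZMod 2) →* G :=
  MonoidHom.mk' (fun v => p ^ ((Multiplicative.toAdd v).1.val) * q ^ ((Multiplicative.toAdd v).2.val))
  (by
    intro u v
    show p ^ ((u.toAdd.1 + v.toAdd.1).val) * q ^ ((u.toAdd.2 + v.toAdd.2).val) =
      p ^ (u.toAdd.1.val) * q ^ (u.toAdd.2.val) * (p ^ (v.toAdd.1.val) * q ^ (v.toAdd.2.val))
    rw [ZMod.val_add, ZMod.val_add, pow_mod_two' hp, pow_mod_two' hq, pow_add, pow_add]
    exact (show Commute (p ^ (v.toAdd.1.val)) (q ^ (u.toAdd.2.val)) from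
      (show Commute p q from hpq).pow_pow _ _).mul_mul_mul_comm _ _)

lemma kleinHom_P {G : Type*} [Group G] (p q : G) (hp : p*p=1) (hq : q*q=1) (hpq : p*q=q*p) :
    kleinHom p q hp hq hpq (ofAdd (1,0)) = p := by
  show p ^ ((1:ZMod 2).val) * q ^ ((0:ZMod 2).val) = p
  simp [ZMod.val_one]

lemma kleinHom_Q {G : Type*} [Group G] (p q : G) (hp : p*p=1) (hq : q*q=1) (hpq : p*q=q*p) :
    kleinHom p q hp hq hpq (ofAdd (0,1)) = q := by
  show p ^ ((0:ZMod 2).val) * q ^ ((1:ZMod 2).val) = q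
  simp [ZMod.val_one]

lemma klein_cases : ∀ v : Multiplicative (ZMod 2 × ZMod 2),
    v = 1 ∨ v = ofAdd (1,0) ∨ v = ofAdd (0,1) ∨ v = ofAdd (1,0) * ofAdd (0,1) := by decide

namespace GsympW

def autP : MulAut Gsymp := MonoidHom.toMulEquiv TP TP TPTP TPTP
def autQ : MulAut Gsymp := MonoidHom.toMulEquiv TQ TQ TQTQ TQTQ

lemma autP_apply (x : Gsymp) : autP x = TP x := rfl
lemma autQ_apply (x : Gsymp) : autQ x = TQ x := rfl

lemma autP2 : autP * autP = 1 := by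
  ext x
  show TP (TP x) = x
  exact DFunLike.congr_fun TPTP x

lemma autQ2 : autQ * autQ = 1 := by
  ext x
  show TQ (TQ x) = x
  exact DFunLike.congr_fun TQTQ x

lemma autPQ : autP * autQ = autQ * autP := by
  ext x
  show TP (TQ x) = TQ (TP x)
  exact DFunLike.congr_fun TPTQ x

lemma autQ_inv : autQ⁻¹ = autQ := inv_eq_of_mul_eq_one_right autQ2
lemma autP_inv : autP⁻¹ = autP := inv_eq_of_mul_eq_one_right autP2

end GsympW

/-- the Klein four-group action on Gsymp -/
def alph : Multiplicative (ZMod 2 × ZMod 2) →* MulAut Gsymp :=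
  kleinHom GsympW.autP GsympW.autQ GsympW.autP2 GsympW.autQ2 GsympW.autPQ

abbrev MM := SemidirectProduct Gsymp (Multiplicative (ZMod 2 × ZMod 2)) alph

def P₀ : Multiplicative (ZMod 2 × ZMod 2) := ofAdd (1,0)
def Q₀ : Multiplicative (ZMod 2 × ZMod 2) := ofAdd (0,1)

lemma alphP : alph P₀ = GsympW.autP := kleinHom_P _ _ _ _ _
lemma alphQ : alph Q₀ = GsympW.autQ := kleinHom_Q _ _ _ _ _

lemma hP₀2 : P₀ * P₀ = 1 := by decide
lemma hQ₀2 : Q₀ * Q₀ = 1 := by decide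
lemma hP₀Q₀2 : (P₀*Q₀) * (P₀*Q₀) = 1 := by decide

namespace GorbW
open SemidirectProduct GsympW

def fPhi : Fin 7 → MM :=
  ![inl (B*A*B⁻¹), inl B, inl C, inl D, inr P₀, inr Q₀,
    (inl (B*A*C*D) * inr (P₀*Q₀))⁻¹]

lemma fPhi0 : fPhi 0 = inl (B*A*B⁻¹) := rfl
lemma fPhi1 : fPhi 1 = inl B := rfl
lemma fPhi2 : fPhi 2 = inl C := rfl
lemma fPhi3 : fPhi 3 = inl D := rfl
lemma fPhi4 : fPhi 4 = inr P₀ := rfl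
lemma fPhi5 : fPhi 5 = inr Q₀ := rfl
lemma fPhi6 : fPhi 6 = (inl (B*A*C*D) * inr (P₀*Q₀))⁻¹ := rfl

lemma conjQhat (n : Gsymp) : inr Q₀ * inl n * (inr Q₀)⁻¹ = (inl (TQ n) : MM) := by
  rw [← map_inv, ← SemidirectProduct.inl_aut, alphQ]; rfl

lemma conjQinvhat (n : Gsymp) : (inr Q₀)⁻¹ * inl n * inr Q₀ = (inl (TQ n) : MM) := by
  rw [← map_inv, ← SemidirectProduct.inl_aut_inv, alphQ, autQ_inv]; rfl

lemma conjPhat (n : Gsymp) : inr P₀ * inl n * (inr P₀)⁻¹ = (inl (TP n) : MM) := by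
  rw [← map_inv, ← SemidirectProduct.inl_aut, alphP]; rfl

lemma conjPinvhat (n : Gsymp) : (inr P₀)⁻¹ * inl n * inr P₀ = (inl (TP n) : MM) := by
  rw [← map_inv, ← SemidirectProduct.inl_aut_inv, alphP, autP_inv]; rfl

lemma conjPQhat (n : Gsymp) : inr (P₀*Q₀) * inl n * (inr (P₀*Q₀))⁻¹ = (inl (TP (TQ n)) : MM) := by
  rw [← map_inv, ← SemidirectProduct.inl_aut]
  rw [show alph (P₀*Q₀) = autP * autQ by rw [map_mul, alphP, alphQ]]
  rfl

lemma hfPhi : ∀ r ∈ GorbRels, FreeGroup.lift fPhi r = 1 := by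
  intro r hr
  simp only [GorbRels, Set.mem_insert_iff, Set.mem_singleton_iff] at hr
  rcases hr with rfl|rfl|rfl|rfl|rfl|rfl|rfl|rfl|rfl|rfl|rfl|rfl|rfl <;>
    simp only [map_mul, map_inv, map_pow, FreeGroup.lift_apply_of] <;>
    simp only [fPhi0, fPhi1, fPhi2, fPhi3, fPhi4, fPhi5, fPhi6]
  · -- R1
    rw [conjQhat, ← map_inv, ← map_mul,
      show TQ (B*A*B⁻¹) * (B*A*B⁻¹)⁻¹ = 1 from by
        simp only [map_mul, map_inv, TQa, TQb]; group, map_one]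
  · -- R2
    rw [conjQinvhat, TQb]
    simp only [← map_mul, ← map_inv, map_eq_one_iff _ SemidirectProduct.inl_injective]
    exact mul_inv_eq_one.mpr E2g.symm
  · -- R3
    rw [conjQinvhat, TQc]
    simp only [← map_mul, ← map_inv, map_eq_one_iff _ SemidirectProduct.inl_injective]
    apply mul_inv_eq_one.mpr
    group
  · -- R4
    rw [conjQinvhat, TQd]
    simp only [← map_mul, ← map_inv, map_eq_one_iff _ SemidirectProduct.inl_injective]
    group
  · -- R5
    rw [conjPinvhat, show TP (B*A*B⁻¹) = B*C*B⁻¹ from by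
      simp only [map_mul, map_inv, TPa, TPb]]
    simp only [← map_mul, ← map_inv, map_eq_one_iff _ SemidirectProduct.inl_injective]
    exact mul_inv_eq_one.mpr E5g.symm
  · -- R6
    rw [conjPinvhat, TPb]
    simp only [← map_mul, ← map_inv, map_eq_one_iff _ SemidirectProduct.inl_injective]
    exact mul_inv_eq_one.mpr E6g.symm
  · -- R7
    rw [conjPinvhat, TPc]
    simp only [← map_mul, ← map_inv, map_eq_one_iff _ SemidirectProduct.inl_injective]
    exact mul_inv_eq_one.mpr E7g.symm
  · -- R8
    rw [conjPhat, TPd]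
    simp only [← map_mul, ← map_inv, map_eq_one_iff _ SemidirectProduct.inl_injective]
    group
  · -- R9
    apply mul_inv_eq_one.mpr
    conv_rhs => rw [show (B*A*C*D:Gsymp) = ((B*A*B⁻¹)*B)*C*D from by group,
      map_mul, map_mul, map_mul, show (inr (P₀*Q₀):MM) = inr P₀ * inr Q₀ from map_mul _ _ _]
    group
  · -- R10
    simp only [← map_mul, ← map_inv, map_eq_one_iff _ SemidirectProduct.inr_injective]
    decide
  · -- R11
    rw [← map_pow, show P₀^2 = 1 from by decide, map_one]
  · -- R12
    rw [← map_pow, show Q₀^2 = 1 from by decide, map_one]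
  · -- R13
    rw [inv_pow, inv_eq_one, pow_two]
    calc (inl (B*A*C*D) * inr (P₀*Q₀)) * (inl (B*A*C*D) * inr (P₀*Q₀))
        = inl (B*A*C*D) * (inr (P₀*Q₀) * inl (B*A*C*D) * (inr (P₀*Q₀))⁻¹)
          * (inr (P₀*Q₀) * inr (P₀*Q₀)) := by group
    _ = inl (B*A*C*D) * inl (TP (TQ (B*A*C*D))) * (inr (P₀*Q₀) * inr (P₀*Q₀)) := by
        rw [conjPQhat]
    _ = inl ((B*A*C*D) * TP (TQ (B*A*C*D))) * inr ((P₀*Q₀) * (P₀*Q₀)) := by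
        rw [← map_mul, ← map_mul]
    _ = 1 := by
        rw [LDelta, show (P₀*Q₀)*(P₀*Q₀) = 1 from by decide, map_one, map_one, mul_one]

end GorbW

namespace GorbW
open SemidirectProduct GsympW

def Phim : Gorb →* MM := PresentedGroup.toGroup hfPhi

lemma Phi0 : Phim X = inl (B*A*B⁻¹) := PresentedGroup.toGroup.of hfPhi
lemma Phi1 : Phim Y = inl B := PresentedGroup.toGroup.of hfPhi
lemma Phi2 : Phim Z = inl C := PresentedGroup.toGroup.of hfPhi
lemma Phi3 : Phim W = inl D := PresentedGroup.toGroup.of hfPhi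
lemma Phi4 : Phim P = inr P₀ := PresentedGroup.toGroup.of hfPhi
lemma Phi5 : Phim Q = inr Q₀ := PresentedGroup.toGroup.of hfPhi
lemma Phi6 : Phim R = (inl (B*A*C*D) * inr (P₀*Q₀))⁻¹ := PresentedGroup.toGroup.of hfPhi

def fj : Fin 4 → Gorb := ![Y⁻¹*X*Y, Y, Z, W]

lemma hfj : ∀ r ∈ GsympRels, FreeGroup.lift fj r = 1 := by
  intro r hr
  simp only [GsympRels, Set.mem_insert_iff, Set.mem_singleton_iff] at hr
  rcases hr with rfl | rfl | rfl | rfl | rfl | rfl <;>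
    simp only [map_mul, map_inv, map_pow, FreeGroup.lift_apply_of]
  · show Y*W*(W*Y)⁻¹ = 1
    exact mul_inv_eq_one.mpr hS1
  · show (Y⁻¹*X*Y)*Z*(Z*(Y⁻¹*X*Y))⁻¹ = 1
    exact mul_inv_eq_one.mpr hS2
  · show (Y⁻¹*X*Y)*Y*(Y⁻¹*X*Y)*(Y*(Y⁻¹*X*Y)*Y)⁻¹ = 1
    apply mul_inv_eq_one.mpr
    calc (Y⁻¹*X*Y)*Y*(Y⁻¹*X*Y) = Y⁻¹*((X*Y*X)*Y) := by group
    _ = Y⁻¹*((Y*X*Y)*Y) := by rw [braid_xy]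
    _ = Y*(Y⁻¹*X*Y)*Y := by group
  · show Z*Y*Z*(Y*Z*Y)⁻¹ = 1
    exact mul_inv_eq_one.mpr hS4.symm
  · show Z*W*Z*(W*Z*W)⁻¹ = 1
    exact mul_inv_eq_one.mpr hS5
  · show (Y*(Y⁻¹*X*Y)*Z*W)^2 = 1
    rw [pow_two]
    calc (Y*(Y⁻¹*X*Y)*Z*W)*(Y*(Y⁻¹*X*Y)*Z*W) = (X*Y*Z*W)*(X*Y*Z*W) := by group
    _ = 1 := hS6

def jm : Gsymp →* Gorb := PresentedGroup.toGroup hfj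

lemma ja : jm A = Y⁻¹*X*Y := PresentedGroup.toGroup.of hfj
lemma jb : jm B = Y := PresentedGroup.toGroup.of hfj
lemma jc : jm C = Z := PresentedGroup.toGroup.of hfj
lemma jd : jm D = W := PresentedGroup.toGroup.of hfj

def tm : Multiplicative (ZMod 2 × ZMod 2) →* Gorb := kleinHom P Q hp2 hq2 rpq

lemma tmP : tm P₀ = P := kleinHom_P _ _ _ _ _
lemma tmQ : tm Q₀ = Q := kleinHom_Q _ _ _ _ _

lemma klein_cases' : ∀ v : Multiplicative (ZMod 2 × ZMod 2),
    v = 1 ∨ v = P₀ ∨ v = Q₀ ∨ v = P₀*Q₀ := by decide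

/-- the compatibility condition for the lift -/
def cond (v : Multiplicative (ZMod 2 × ZMod 2)) : Prop :=
  jm.comp (alph v).toMonoidHom = (MulAut.conj (tm v)).toMonoidHom.comp jm

lemma cond_one : cond 1 := by
  apply MonoidHom.ext; intro g
  show jm (alph 1 g) = tm 1 * jm g * (tm 1)⁻¹
  rw [map_one, map_one]
  show jm g = 1 * jm g * 1⁻¹
  group

lemma cond_mul (v₁ v₂ : Multiplicative (ZMod 2 × ZMod 2)) (h₁ : cond v₁) (h₂ : cond v₂) :
    cond (v₁*v₂) := by
  apply MonoidHom.ext; intro g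
  have e1 := DFunLike.congr_fun h₁ ((alph v₂) g)
  have e2 := DFunLike.congr_fun h₂ g
  simp only [MonoidHom.comp_apply, MulEquiv.coe_toMonoidHom, MulAut.conj_apply] at e1 e2 ⊢
  rw [map_mul, map_mul]
  rw [show (alph v₁ * alph v₂) g = alph v₁ (alph v₂ g) from rfl, e1, e2]
  group

lemma cond_P : cond P₀ := by
  apply PresentedGroup.ext; intro x
  have hcoe : ∀ g : Gsymp, (jm.comp (alph P₀).toMonoidHom) g = jm (TP g) := by
    intro g
    simp only [MonoidHom.comp_apply, MulEquiv.coe_toMonoidHom, alphP]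
    rfl
  fin_cases x
  · rw [hcoe]
    show jm (TP A) = tm P₀ * jm A * (tm P₀)⁻¹
    rw [TPa, jc, tmP, ja]
    exact cP_a.symm
  · rw [hcoe]
    show jm (TP B) = tm P₀ * jm B * (tm P₀)⁻¹
    rw [TPb, jb, tmP]
    exact spY'.symm
  · rw [hcoe]
    show jm (TP C) = tm P₀ * jm C * (tm P₀)⁻¹
    rw [TPc, ja, tmP, jc]
    exact cP_c.symm
  · rw [hcoe]
    show jm (TP D) = tm P₀ * jm D * (tm P₀)⁻¹
    rw [TPd, jd, tmP]
    exact spW.symm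

lemma cond_Q : cond Q₀ := by
  apply PresentedGroup.ext; intro x
  have hcoe : ∀ g : Gsymp, (jm.comp (alph Q₀).toMonoidHom) g = jm (TQ g) := by
    intro g
    simp only [MonoidHom.comp_apply, MulEquiv.coe_toMonoidHom, alphQ]
    rfl
  fin_cases x
  · rw [hcoe]
    show jm (TQ A) = tm Q₀ * jm A * (tm Q₀)⁻¹
    rw [TQa, tmQ, ja]
    simp only [map_mul, map_inv, ja, jb, jd]
    exact (show W⁻¹*(Y*(Y⁻¹*X*Y)*Y⁻¹)*W = W⁻¹*X*W by group).trans cQ_a.symm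
  · rw [hcoe]
    show jm (TQ B) = tm Q₀ * jm B * (tm Q₀)⁻¹
    rw [TQb, jd, tmQ, jb]
    exact sqY'.symm
  · rw [hcoe]
    show jm (TQ C) = tm Q₀ * jm C * (tm Q₀)⁻¹
    rw [TQc, tmQ, jc]
    simp only [map_mul, map_inv, jb, jc, jd]
    exact (show (Y*Z)*W*(Y*Z)⁻¹ = (Y*Z)*W*(Y*Z)⁻¹ by rfl).trans sqZ.symm
  · rw [hcoe]
    show jm (TQ D) = tm Q₀ * jm D * (tm Q₀)⁻¹
    rw [TQd, jb, tmQ, jd]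
    exact sqW.symm

end GorbW

namespace GorbW
open SemidirectProduct GsympW

lemma hcomp : ∀ v, cond v := by
  intro v
  rcases klein_cases' v with rfl | rfl | rfl | rfl
  · exact cond_one
  · exact cond_P
  · exact cond_Q
  · exact cond_mul _ _ cond_P cond_Q

def Psim : MM →* Gorb := SemidirectProduct.lift jm tm hcomp

lemma Psim_inl (n : Gsymp) : Psim (inl n) = jm n := SemidirectProduct.lift_inl jm tm hcomp n
lemma Psim_inr (v : Multiplicative (ZMod 2 × ZMod 2)) : Psim (inr v) = tm v :=
  SemidirectProduct.lift_inr jm tm hcomp v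

lemma PsiPhi : Psim.comp Phim = MonoidHom.id Gorb := by
  apply PresentedGroup.ext; intro x
  fin_cases x
  · show Psim (Phim X) = X
    rw [Phi0, Psim_inl]
    simp only [map_mul, map_inv, ja, jb]
    group
  · show Psim (Phim Y) = Y
    rw [Phi1, Psim_inl, jb]
  · show Psim (Phim Z) = Z
    rw [Phi2, Psim_inl, jc]
  · show Psim (Phim W) = W
    rw [Phi3, Psim_inl, jd]
  · show Psim (Phim P) = P
    rw [Phi4, Psim_inr, tmP]
  · show Psim (Phim Q) = Q
    rw [Phi5, Psim_inr, tmQ]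
  · show Psim (Phim R) = R
    rw [Phi6, map_inv, map_mul, Psim_inl, Psim_inr,
      show tm (P₀*Q₀) = P*Q from by rw [map_mul, tmP, tmQ]]
    simp only [map_mul, map_inv, ja, jb, jc, jd]
    rw [hRvalue]
    group

lemma PhiPsi : Phim.comp Psim = MonoidHom.id MM := by
  apply SemidirectProduct.hom_ext
  · apply PresentedGroup.ext; intro x
    fin_cases x
    · show Phim (Psim (inl A)) = inl A
      rw [Psim_inl, ja]
      simp only [map_mul, map_inv, Phi0, Phi1]
      simp only [← map_mul, ← map_inv]
      refine congrArg _ ?_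
      group
    · show Phim (Psim (inl B)) = inl B
      rw [Psim_inl, jb, Phi1]
    · show Phim (Psim (inl C)) = inl C
      rw [Psim_inl, jc, Phi2]
    · show Phim (Psim (inl D)) = inl D
      rw [Psim_inl, jd, Phi3]
  · apply MonoidHom.ext; intro v
    rcases klein_cases' v with rfl | rfl | rfl | rfl
    · simp only [MonoidHom.comp_apply, map_one]
    · show Phim (Psim (inr P₀)) = inr P₀
      rw [Psim_inr, tmP, Phi4]
    · show Phim (Psim (inr Q₀)) = inr Q₀
      rw [Psim_inr, tmQ, Phi5]
    · show Phim (Psim (inr (P₀*Q₀))) = inr (P₀*Q₀)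
      rw [show (inr (P₀*Q₀) : MM) = inr P₀ * inr Q₀ from map_mul _ _ _, map_mul, map_mul,
        Psim_inr, Psim_inr, tmP, tmQ, Phi4, Phi5]

end GorbW

namespace GorbW
open SemidirectProduct GsympW

def phim : Gorb →* Multiplicative (ZMod 2 × ZMod 2) := SemidirectProduct.rightHom.comp Phim

lemma phim_apply (g : Gorb) : phim g = SemidirectProduct.rightHom (Phim g) := rfl

lemma phim_comp_tm : phim.comp tm = MonoidHom.id _ := by
  apply MonoidHom.ext; intro v
  rcases klein_cases' v with rfl | rfl | rfl | rfl
  · simp only [MonoidHom.comp_apply, map_one, MonoidHom.id_apply]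
  · show phim (tm P₀) = P₀
    rw [tmP, phim_apply, Phi4, rightHom_inr]
  · show phim (tm Q₀) = Q₀
    rw [tmQ, phim_apply, Phi5, rightHom_inr]
  · show phim (tm (P₀*Q₀)) = P₀*Q₀
    rw [map_mul, tmP, tmQ, map_mul, phim_apply, phim_apply, Phi4, Phi5, rightHom_inr, rightHom_inr]

lemma phim_jm (g : Gsymp) : Phim (jm g) = inl g := by
  have := DFunLike.congr_fun PhiPsi (inl g : MM)
  simpa [Psim_inl] using this

lemma jm_ker (g : Gsymp) : phim (jm g) = 1 := by
  rw [phim_apply, phim_jm, rightHom_inl]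

def jker : Gsymp →* phim.ker :=
  jm.codRestrict phim.ker (fun g => MonoidHom.mem_ker.mpr (jm_ker g))

lemma jker_coe (g : Gsymp) : (jker g : Gorb) = jm g := rfl

lemma ker_right (k : phim.ker) : (Phim (k : Gorb)).right = 1 := k.2

def backfun : phim.ker → Gsymp := fun k => (Phim (k : Gorb)).left

lemma back_left (k : phim.ker) : inl (backfun k) = Phim (k : Gorb) := by
  have h := SemidirectProduct.inl_left_mul_inr_right (Phim (k : Gorb))
  rw [ker_right k, map_one, mul_one] at h
  exact h

lemma left_inv_jker (g : Gsymp) : backfun (jker g) = g := by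
  show (Phim (jm g)).left = g
  rw [phim_jm]
  rfl

lemma right_inv_jker (k : phim.ker) : jker (backfun k) = k := by
  apply Subtype.ext
  show jm (backfun k) = (k : Gorb)
  have h1 : jm (backfun k) = Psim (Phim (k : Gorb)) := by
    rw [← back_left k, Psim_inl]
  rw [h1]
  exact DFunLike.congr_fun PsiPhi (k : Gorb)

def isoKer : Gsymp ≃* phim.ker where
  toFun := jker
  invFun := backfun
  left_inv := left_inv_jker
  right_inv := right_inv_jker
  map_mul' := jker.map_mul

end GorbW



/-- The assignment `cᵢ ↦ (0,0)`, `ℓ₁ ↦ (1,0)`, `ℓ₂ ↦ (0,1)`, `ℓ∞ ↦ (1,1)` defines a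
surjective homomorphism `φ : G_orb → ℤ/2 × ℤ/2`, the resulting short exact sequence
splits, and `ker φ ≅ G_symp` via `a = c₂⁻¹c₁c₂`, `b = c₂`, `c = c₃`, `d = c₄`;
in particular `G_orb ≅ G_symp ⋊ (ℤ/2 × ℤ/2)`. -/
theorem Gorb_splits_as_Gsymp_by_Klein :
    ∃ φ : Gorb →* Multiplicative (ZMod 2 × ZMod 2),
      (∀ i : Fin 4, φ (PresentedGroup.of ⟨i.val, by omega⟩) = 1) ∧
      φ (PresentedGroup.of 4) = Multiplicative.ofAdd (1, 0) ∧
      φ (PresentedGroup.of 5) = Multiplicative.ofAdd (0, 1) ∧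
      φ (PresentedGroup.of 6) = Multiplicative.ofAdd (1, 1) ∧
      Function.Surjective φ ∧
      (∃ s : Multiplicative (ZMod 2 × ZMod 2) →* Gorb, φ.comp s = MonoidHom.id _) ∧
      ∃ iso : Gsymp ≃* φ.ker,
        ((iso (PresentedGroup.of 0) : φ.ker) : Gorb) =
          (PresentedGroup.of 1)⁻¹ * PresentedGroup.of 0 * PresentedGroup.of 1 ∧
        ((iso (PresentedGroup.of 1) : φ.ker) : Gorb) = PresentedGroup.of 1 ∧
        ((iso (PresentedGroup.of 2) : φ.ker) : Gorb) = PresentedGroup.of 2 ∧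
        ((iso (PresentedGroup.of 3) : φ.ker) : Gorb) = PresentedGroup.of 3 := by
  classical
  refine ⟨GorbW.phim, ?_, ?_, ?_, ?_, ?_, ⟨GorbW.tm, GorbW.phim_comp_tm⟩, GorbW.isoKer, ?_, ?_, ?_, ?_⟩
  · intro i
    fin_cases i
    · show GorbW.phim GorbW.X = 1
      rw [GorbW.phim_apply, GorbW.Phi0, SemidirectProduct.rightHom_inl]
    · show GorbW.phim GorbW.Y = 1
      rw [GorbW.phim_apply, GorbW.Phi1, SemidirectProduct.rightHom_inl]
    · show GorbW.phim GorbW.Z = 1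
      rw [GorbW.phim_apply, GorbW.Phi2, SemidirectProduct.rightHom_inl]
    · show GorbW.phim GorbW.W = 1
      rw [GorbW.phim_apply, GorbW.Phi3, SemidirectProduct.rightHom_inl]
  · show GorbW.phim GorbW.P = _
    rw [GorbW.phim_apply, GorbW.Phi4, SemidirectProduct.rightHom_inr]
    rfl
  · show GorbW.phim GorbW.Q = _
    rw [GorbW.phim_apply, GorbW.Phi5, SemidirectProduct.rightHom_inr]
    rfl
  · show GorbW.phim GorbW.R = _
    rw [GorbW.phim_apply, GorbW.Phi6, map_inv, map_mul,
      SemidirectProduct.rightHom_inl, SemidirectProduct.rightHom_inr]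
    decide
  · intro v
    exact ⟨GorbW.tm v, DFunLike.congr_fun GorbW.phim_comp_tm v⟩
  · show (GorbW.jker (PresentedGroup.of 0) : Gorb) = _
    rw [GorbW.jker_coe]
    exact GorbW.ja
  · show (GorbW.jker (PresentedGroup.of 1) : Gorb) = _
    rw [GorbW.jker_coe]
    exact GorbW.jb
  · show (GorbW.jker (PresentedGroup.of 2) : Gorb) = _
    rw [GorbW.jker_coe]
    exact GorbW.jc
  · show (GorbW.jker (PresentedGroup.of 3) : Gorb) = _
    rw [GorbW.jker_coe]
    exact GorbW.jd
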